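/- arXiv:2504.05073 — 6 statements merged into one kernel-verified Lean document; each statement's English description precedes it below -/
import Mathlib

section
/- Let (A, m) be a local ring which is separated (i.e. the intersection of all powers of m is zero), and let q(t) = t^d + q_{d-1} t^{d-1} + ... + q_0 be a Weierstrass polynomial of degree d (i.e. all q_i lie in m). If p(t) ∈ A[t] is a polynomial such that p(t) = q(t)·u(t) for some power series u(t) ∈ A[[t]], then u(t) is a polynomial, i.e. q·A[[t]] ∩ A[t] = q·A[t]. -/
/-!
Write `q = X^d + r`, where every coefficient of `r` lies in `m` and vanishes from degree `d` on.
Comparing coefficients of degree `n + d > deg p` in `p = q u` gives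
`u_n = -∑_{i < d} r_i u_{n+d-i}`, which expresses a high coefficient of `u` through
strictly higher ones times elements of `m`. By induction on `k`, every coefficient of `u` of
degree `> deg p` lies in `m^k` for all `k`, hence vanishes since `A` is `m`-adically separated.
-/

open IsLocalRing Polynomial

/-- A Weierstrass polynomial of degree `d` over a local ring: a monic polynomial of
degree `d` all of whose non-leading coefficients lie in the maximal ideal. -/
def IsWeierstrassPolynomial {A : Type*} [CommRing A] [IsLocalRing A]
    (q : Polynomial A) (d : ℕ) : Prop :=
  q.Monic ∧ q.natDegree = d ∧ ∀ i < d, q.coeff i ∈ maximalIdeal A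

namespace PowerSeries

variable {A : Type*} [CommRing A] {I : Ideal A}

theorem coeff_mul_mem_pow_succ {r u : A⟦X⟧} {d n k : ℕ} (hrI : ∀ i, coeff i r ∈ I)
    (hrd : ∀ i, d ≤ i → coeff i r = 0) (hu : ∀ m, n < m → coeff m u ∈ I ^ k) :
    coeff (n + d) (r * u) ∈ I ^ (k + 1) := by
  rw [coeff_mul]
  refine Ideal.sum_mem _ fun ⟨i, j⟩ hij => ?_
  rw [Finset.HasAntidiagonal.mem_antidiagonal] at hij
  by_cases hi : d ≤ i
  · simp [hrd i hi]
  · rw [pow_succ']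
    exact Ideal.mul_mem_mul (hrI i) (hu j (by omega))

theorem eq_coe_trunc_of_coeff_eq_zero {u : A⟦X⟧} {N : ℕ}
    (hu : ∀ n, N ≤ n → coeff n u = 0) : u = trunc N u := by
  ext n
  rw [Polynomial.coeff_coe, coeff_trunc]
  split_ifs with hn
  · rfl
  · exact hu n (by omega)

end PowerSeries

namespace Polynomial

open scoped PowerSeries

variable {A : Type*} [CommRing A] {I : Ideal A} {q : A[X]}

theorem coeff_eraseLead_mem (hqI : ∀ i < q.natDegree, q.coeff i ∈ I) (i : ℕ) :
    q.eraseLead.coeff i ∈ I := by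
  rw [eraseLead_coeff]
  split_ifs with hi
  · exact I.zero_mem
  · rcases lt_or_gt_of_ne hi with hi | hi
    · exact hqI i hi
    · simp [coeff_eq_zero_of_natDegree_lt hi]

theorem coeff_eraseLead_eq_zero_of_natDegree_le {i : ℕ} (hi : q.natDegree ≤ i) :
    q.eraseLead.coeff i = 0 := by
  rw [eraseLead_coeff]
  split_ifs
  · rfl
  · exact coeff_eq_zero_of_natDegree_lt (by omega)

namespace Monic

theorem coeff_add_natDegree_coe_mul (hq : q.Monic) (u : A⟦X⟧) (n : ℕ) :
    PowerSeries.coeff (n + q.natDegree) ((q : A⟦X⟧) * u) =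
      PowerSeries.coeff n u +
        PowerSeries.coeff (n + q.natDegree) ((q.eraseLead : A⟦X⟧) * u) := by
  have hsplit : (q : A⟦X⟧) = PowerSeries.X ^ q.natDegree + (q.eraseLead : A⟦X⟧) := by
    conv_lhs => rw [← q.eraseLead_add_C_mul_X_pow, hq.leadingCoeff]
    simp [add_comm]
  rw [hsplit, add_mul, map_add, PowerSeries.coeff_X_pow_mul]

theorem coeff_mem_pow_of_coeff_mul_eq_zero (hq : q.Monic)
    (hqI : ∀ i < q.natDegree, q.coeff i ∈ I) {u : A⟦X⟧} {N : ℕ}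
    (hqu : ∀ n, N ≤ n → PowerSeries.coeff (n + q.natDegree) ((q : A⟦X⟧) * u) = 0)
    (k : ℕ) : ∀ n, N ≤ n → PowerSeries.coeff n u ∈ I ^ k := by
  induction k with
  | zero => simp
  | succ k ih =>
    intro n hn
    have hrec : PowerSeries.coeff n u =
        -PowerSeries.coeff (n + q.natDegree) ((q.eraseLead : A⟦X⟧) * u) :=
      eq_neg_of_add_eq_zero_left <| (hq.coeff_add_natDegree_coe_mul u n).symm.trans (hqu n hn)
    rw [hrec]
    refine (I ^ (k + 1)).neg_mem <| PowerSeries.coeff_mul_mem_pow_succ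
      (fun i => by simpa using coeff_eraseLead_mem hqI i)
      (fun i hi => by simpa using coeff_eraseLead_eq_zero_of_natDegree_le hi)
      fun m (hm : n < m) => ih m (by omega)

theorem exists_eq_coe_of_coe_eq_mul (hq : q.Monic) (hqI : ∀ i < q.natDegree, q.coeff i ∈ I)
    (hI : (⨅ k : ℕ, I ^ k) = ⊥) {p : A[X]} {u : A⟦X⟧}
    (h : (p : A⟦X⟧) = q * u) : ∃ v : A[X], u = v := by
  refine ⟨u.trunc (p.natDegree + 1), PowerSeries.eq_coe_trunc_of_coeff_eq_zero fun n hn => ?_⟩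
  have hqu : ∀ n, p.natDegree + 1 ≤ n →
      PowerSeries.coeff (n + q.natDegree) ((q : A⟦X⟧) * u) = 0 := fun n hn => by
    rw [← h, Polynomial.coeff_coe, coeff_eq_zero_of_natDegree_lt (by omega)]
  have hmem : PowerSeries.coeff n u ∈ ⨅ k : ℕ, I ^ k :=
    Ideal.mem_iInf.mpr fun k => hq.coeff_mem_pow_of_coeff_mul_eq_zero hqI hqu k n hn
  rwa [hI] at hmem

end Monic

end Polynomial

/-- If `(A, m)` is a separated local ring and `q` a Weierstrass polynomial of degree `d`,
then `q·A[[t]] ∩ A[t] = q·A[t]`: any polynomial `p` which factors as `p = q·u` with `u` a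
power series has `u` a polynomial. -/
theorem weierstrass_mul_powerSeries_polynomial {A : Type*} [CommRing A] [IsLocalRing A]
    (hsep : (⨅ n : ℕ, (maximalIdeal A) ^ n) = ⊥)
    {d : ℕ} {q : Polynomial A} (hq : IsWeierstrassPolynomial q d)
    (p : Polynomial A) (u : PowerSeries A)
    (h : (p : PowerSeries A) = (q : PowerSeries A) * u) :
    ∃ v : Polynomial A, u = (v : PowerSeries A) ∧ p = q * v := by
  obtain ⟨hmon, rfl, hcoef⟩ := hq
  obtain ⟨v, rfl⟩ := hmon.exists_eq_coe_of_coe_eq_mul hcoef hsep h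
  exact ⟨v, rfl, by exact_mod_cast h⟩
end

section
/- Let (A, m) be a separated local ring (⋂_n m^n = 0) and q(t) ∈ A[t] a Weierstrass polynomial of degree d. Then q is a regular element (non zero-divisor) in both A[t] and A[[t]]. -/
open IsLocalRing Polynomial

/-!
A monic polynomial is a non zero-divisor in `A[t]` since leading coefficients multiply.
In `A[[t]]`, if `q f = 0` then comparing the coefficients of `t^(d + k)` gives
`f_k = -∑_{i < d} q_i f_{d + k - i}`, so `f_k ∈ mⁿ` for all `k` implies `f_k ∈ mⁿ⁺¹` for
all `k`; hence every coefficient of `f` lies in `⋂ₙ mⁿ = 0`. This is the uniqueness half of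
Weierstrass division by `q`.
-/

theorem IsHausdorff.of_iInf_pow_eq_bot {R : Type*} [CommRing R] {I : Ideal R}
    (h : ⨅ n : ℕ, I ^ n = ⊥) : IsHausdorff I R where
  haus' x hx := by
    rw [← Ideal.mem_bot, ← h, Ideal.mem_iInf]
    intro n
    simpa [SModEq.zero] using hx n

theorem IsWeierstrassPolynomial.isDistinguishedAt {A : Type*} [CommRing A] [IsLocalRing A]
    {q : A[X]} {d : ℕ} (hq : IsWeierstrassPolynomial q d) :
    q.IsDistinguishedAt (maximalIdeal A) :=
  have ⟨hmonic, hdeg, hcoeff⟩ := hq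
  { mem := fun hn => hcoeff _ (hdeg ▸ hn), monic := hmonic }

theorem PowerSeries.IsWeierstrassDivisorAt.mem_nonZeroDivisors {A : Type*} [CommRing A]
    {I : Ideal A} [IsHausdorff I A] {g : PowerSeries A} (hg : g.IsWeierstrassDivisorAt I) :
    g ∈ nonZeroDivisors (PowerSeries A) := by
  refine mem_nonZeroDivisors_iff_right.2 fun f hf => ?_
  rw [mul_comm, ← Polynomial.coe_zero] at hf
  exact (hg.eq_zero_of_mul_eq (by simp) hf).1

/-- If `(A, m)` is a separated local ring (`⋂ₙ mⁿ = 0`) and `q` a Weierstrass polynomial of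
degree `d`, then `q` is a non zero-divisor in both `A[t]` and `A[[t]]`. -/
theorem weierstrass_polynomial_regular {A : Type*} [CommRing A] [IsLocalRing A]
    (hsep : (⨅ n : ℕ, (maximalIdeal A) ^ n) = ⊥)
    {d : ℕ} {q : Polynomial A} (hq : IsWeierstrassPolynomial q d) :
    q ∈ nonZeroDivisors (Polynomial A) ∧
      (q : PowerSeries A) ∈ nonZeroDivisors (PowerSeries A) := by
  have : IsHausdorff (maximalIdeal A) A := .of_iInf_pow_eq_bot hsep
  exact ⟨hq.1.mem_nonZeroDivisors,
    hq.isDistinguishedAt.isWeierstrassDivisorAt'.mem_nonZeroDivisors⟩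
end

section
/- Let (A, m) be a separated local ring with residue field K, and let f(t) ∈ A[[t]] be a power series whose image f₀(t) ∈ K[[t]] modulo m is nonzero. Then f(t) is a regular element (non zero-divisor) in A[[t]]. -/
/-!
Let `d` be the first index at which `f` has a unit coefficient, all earlier coefficients lying
in an ideal `I`. If `g * f = 0` and every coefficient of `g` lies in an ideal `J`, then reading
off the coefficient of `t ^ (n + d)` in `g * f` shows, by induction on `n`, that every
coefficient of `g` lies in `J * I`. Iterating, the coefficients of `g` lie in every `I ^ k`,
so they vanish once `⋂ₖ I ^ k = 0`. For `I = m` such a `d` exists exactly when `f mod m ≠ 0`.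
-/

open IsLocalRing Finset

namespace PowerSeries

variable {A : Type*} [CommRing A] {I : Ideal A} {f g : A⟦X⟧} {d : ℕ}

theorem coeff_mem_mul_of_mul_eq_zero (hd : IsUnit (coeff d f))
    (hlt : ∀ i < d, coeff i f ∈ I) (hgf : g * f = 0) {J : Ideal A}
    (hg : ∀ n, coeff n g ∈ J) (n : ℕ) : coeff n g ∈ J * I := by
  classical
  induction n using Nat.strong_induction_on with
  | _ n ih =>
  have hmem : (n, d) ∈ antidiagonal (n + d) := by simp
  have hrest : ∑ p ∈ (antidiagonal (n + d)).erase (n, d),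
      coeff p.1 g * coeff p.2 f ∈ J * I := by
    refine Ideal.sum_mem _ fun ⟨a, b⟩ hp => ?_
    rw [mem_erase, HasAntidiagonal.mem_antidiagonal] at hp
    obtain ⟨hne, hab⟩ := hp
    rcases lt_or_gt_of_ne (show a ≠ n by rintro rfl; exact hne (Prod.ext rfl (by omega))) with ha | ha
    · exact Ideal.mul_mem_right _ _ (ih a ha)
    · exact Ideal.mul_mem_mul (hg a) (hlt b (by omega))
  have hcoeff : coeff n g * coeff d f + ∑ p ∈ (antidiagonal (n + d)).erase (n, d),
      coeff p.1 g * coeff p.2 f = 0 := by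
    rw [add_sum_erase _ (fun p => coeff p.1 g * coeff p.2 f) hmem, ← coeff_mul, hgf, map_zero]
  have hlead : coeff n g * coeff d f ∈ J * I :=
    (Ideal.add_mem_iff_left _ hrest).mp (hcoeff ▸ zero_mem _)
  exact (Ideal.mul_unit_mem_iff_mem _ hd).mp hlead

theorem coeff_mem_pow_of_mul_eq_zero (hd : IsUnit (coeff d f))
    (hlt : ∀ i < d, coeff i f ∈ I) (hgf : g * f = 0) (k n : ℕ) : coeff n g ∈ I ^ k := by
  induction k generalizing n with
  | zero => simp
  | succ k ih => exact pow_succ I k ▸ coeff_mem_mul_of_mul_eq_zero hd hlt hgf ih n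

theorem mem_nonZeroDivisors_of_isUnit_coeff (hI : ⨅ k : ℕ, I ^ k = ⊥)
    (hd : IsUnit (coeff d f)) (hlt : ∀ i < d, coeff i f ∈ I) : f ∈ nonZeroDivisors A⟦X⟧ := by
  refine mem_nonZeroDivisors_iff_right.mpr fun g hgf => ext fun n => ?_
  have hmem : coeff n g ∈ ⨅ k : ℕ, I ^ k :=
    Ideal.mem_iInf.mpr fun k => coeff_mem_pow_of_mul_eq_zero hd hlt hgf k n
  simpa [hI] using hmem

theorem exists_isUnit_coeff_of_map_residue_ne_zero [IsLocalRing A]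
    (hf : map (residue A) f ≠ 0) :
    ∃ d, IsUnit (coeff d f) ∧ ∀ i < d, coeff i f ∈ maximalIdeal A := by
  classical
  have hex : ∃ n, coeff n f ∉ maximalIdeal A := by
    contrapose! hf
    ext n
    simpa using (residue_eq_zero_iff _).mpr (hf n)
  exact ⟨Nat.find hex, notMem_maximalIdeal.mp (Nat.find_spec hex),
    fun i hi => not_not.mp (Nat.find_min hex hi)⟩

end PowerSeries

/-- If `(A, m)` is a separated local ring (`⋂ₙ mⁿ = 0`) with residue field `K` and
`f ∈ A[[t]]` is a power series whose image in `K[[t]]` (reducing each coefficient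
modulo `m`) is nonzero, then `f` is a non zero-divisor in `A[[t]]`. -/
theorem powerSeries_regular_of_residue_ne_zero {A : Type*} [CommRing A] [IsLocalRing A]
    (hsep : (⨅ n : ℕ, (maximalIdeal A) ^ n) = ⊥)
    (f : PowerSeries A)
    (hf : PowerSeries.map (residue A) f ≠ 0) :
    f ∈ nonZeroDivisors (PowerSeries A) := by
  obtain ⟨d, hd, hlt⟩ := PowerSeries.exists_isUnit_coeff_of_map_residue_ne_zero hf
  exact PowerSeries.mem_nonZeroDivisors_of_isUnit_coeff hsep hd hlt
end

section
/- Let (A, m) be a complete local ring with residue field K and let f(t) ∈ A[[t]] be a power series whose reduction f₀(t) ∈ K[[t]] modulo m has t-adic order d < ∞. Then there exists a Weierstrass polynomial q(t) ∈ A[t] of degree d and a unit u(t) ∈ A[[t]]^× such that f(t) = u(t)·q(t). -/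
open IsLocalRing Polynomial

theorem Polynomial.IsDistinguishedAt.isWeierstrassPolynomial {A : Type*} [CommRing A]
    [IsLocalRing A] {q : A[X]} (hq : q.IsDistinguishedAt (maximalIdeal A)) :
    IsWeierstrassPolynomial q q.natDegree :=
  ⟨hq.monic, rfl, fun _ hi => hq.mem hi⟩

/-- Weierstrass preparation: if `(A, m)` is a complete local ring with residue field `K`
and `f ∈ A[[t]]` has reduction `f₀ ∈ K[[t]]` of `t`-adic order `d < ∞` (that is, the
coefficients of `f₀` below degree `d` vanish and the `d`-th one does not), then
`f = u·q` for a Weierstrass polynomial `q` of degree `d` and a unit `u ∈ A[[t]]ˣ`. -/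
theorem weierstrass_preparation {A : Type*} [CommRing A] [IsLocalRing A]
    [IsAdicComplete (maximalIdeal A) A]
    (f : PowerSeries A) (d : ℕ)
    (h0 : ∀ i < d, PowerSeries.coeff i (PowerSeries.map (residue A) f) = 0)
    (hd : PowerSeries.coeff d (PowerSeries.map (residue A) f) ≠ 0) :
    ∃ (q : Polynomial A) (u : PowerSeries A), IsWeierstrassPolynomial q d ∧
      IsUnit u ∧ f = u * (q : PowerSeries A) := by
  have hord : (PowerSeries.map (residue A) f).order = d := PowerSeries.order_eq_nat.2 ⟨hd, h0⟩
  have hf : PowerSeries.map (residue A) f ≠ 0 := fun h => hd (by rw [h, map_zero])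
  obtain ⟨q, u, H⟩ := PowerSeries.exists_isWeierstrassFactorization hf
  have hdeg : q.natDegree = d := by
    rw [H.natDegree_eq_toNat_order_map, hord, ENat.toNat_natCast]
  refine ⟨q, u, hdeg ▸ H.isDistinguishedAt.isWeierstrassPolynomial, H.isUnit, ?_⟩
  rw [H.eq_mul, mul_comm]
end

section
/- Let K ⊂ L be a finite separable field extension, (A, m_A) a local ring with residue field L and m_A nilpotent, and suppose given a ring homomorphism j: K → A such that the composite K → A → A/m_A ≅ L is the inclusion K ⊂ L. Then there exists a unique ring homomorphism ι: L → A extending j (i.e. ι|_K = j) such that the composite L → A → A/m_A is the identity of L. In particular ι is a coefficient field of A. -/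
open IsLocalRing Polynomial

lemma isAdicComplete_of_nilpotent' {A : Type*} [CommRing A] {I : Ideal A} {n : ℕ}
    (h : I ^ n = ⊥) : IsAdicComplete I A := by
  have hsmul : ∀ m : ℕ, (I ^ m • ⊤ : Submodule A A) = I ^ m := by
    intro m; rw [smul_eq_mul, Ideal.mul_top]
  haveI hH : IsHausdorff I A := by
    constructor
    intro x hx
    have := hx n
    rw [SModEq.sub_mem, hsmul, h, sub_zero, Ideal.mem_bot] at this
    exact this
  haveI hP : IsPrecomplete I A := by
    constructor
    intro f hf
    refine ⟨f n, fun m => ?_⟩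
    rcases le_or_gt m n with hm | hm
    · exact hf hm
    · have hbot : (I ^ m : Ideal A) = ⊥ := by
        rw [eq_bot_iff, ← h]
        exact Ideal.pow_le_pow_right hm.le
      have := hf hm.le
      rw [SModEq.sub_mem, hsmul, h, Ideal.mem_bot, sub_eq_zero] at this
      rw [SModEq.sub_mem, hsmul, hbot, Ideal.mem_bot, sub_eq_zero]
      exact this.symm
  exact ⟨⟩

/-- Infinitesimal lifting for finite separable extensions: let `K ⊆ L` be a finite
separable field extension, `(A, m_A)` a local ring with `m_A` nilpotent, `ρ : A → L` a
surjective ring map with kernel `m_A` (identifying the residue field of `A` with `L`),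
and `j : K → A` a ring map such that `ρ ∘ j` is the inclusion `K ⊆ L`. Then there is a
unique ring homomorphism `ι : L → A` extending `j` with `ρ ∘ ι = id_L`; in particular
`ι` is a coefficient field of `A`. -/
theorem exists_unique_coefficient_field_extension {K L A : Type*}
    [Field K] [Field L] [Algebra K L] [FiniteDimensional K L] [Algebra.IsSeparable K L]
    [CommRing A] [IsLocalRing A]
    (hnilp : ∃ n : ℕ, (maximalIdeal A) ^ n = ⊥)
    (ρ : A →+* L) (hρ : Function.Surjective ρ)
    (hker : RingHom.ker ρ = maximalIdeal A)
    (j : K →+* A) (hj : ρ.comp j = algebraMap K L) :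
    ∃! ι : L →+* A, ι.comp (algebraMap K L) = j ∧ ρ.comp ι = RingHom.id L := by
  classical
  obtain ⟨n, hn⟩ := hnilp
  haveI : IsAdicComplete (maximalIdeal A) A := isAdicComplete_of_nilpotent' hn
  letI : Algebra K A := j.toAlgebra
  have halg : (algebraMap K A : K →+* A) = j := rfl
  -- units from nonvanishing under ρ
  have unit_of : ∀ d : A, ρ d ≠ 0 → IsUnit d := by
    intro d hd
    by_contra h
    apply hd
    rw [← RingHom.mem_ker, hker]
    exact h
  set pb := Field.powerBasisOfFiniteOfSeparable K L with hpb
  set α := pb.gen with hα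
  set f := minpoly K α with hfdef
  have hint : IsIntegral K α := pb.isIntegral_gen
  have hmonic : f.Monic := minpoly.monic hint
  have hsep : f.Separable := Algebra.IsSeparable.isSeparable K α
  have hdzero : Polynomial.aeval α (Polynomial.derivative f) ≠ 0 :=
    hsep.aeval_derivative_ne_zero (minpoly.aeval K α)
  -- the key evaluation compatibility
  have key : ∀ (p : Polynomial K) (a : A), ρ ((p.map j).eval a) = Polynomial.aeval (ρ a) p := by
    intro p a
    rw [Polynomial.eval_map, Polynomial.hom_eval₂, hj, Polynomial.aeval_def]
  set F := f.map j with hF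
  obtain ⟨a₀, ha₀⟩ := hρ α
  -- Hensel's lemma
  obtain ⟨a, haroot, hasub⟩ := HenselianRing.is_henselian (I := maximalIdeal A) F
    (hmonic.map j) a₀
    (by rw [← hker, RingHom.mem_ker, key, ha₀, hfdef, minpoly.aeval])
    (by
      letI : Field (A ⧸ maximalIdeal A) := Ideal.Quotient.field (maximalIdeal A)
      rw [isUnit_iff_ne_zero, Ne, Ideal.Quotient.eq_zero_iff_mem]
      intro hmem
      apply hdzero
      have : ρ (F.derivative.eval a₀) = 0 := by
        rw [← RingHom.mem_ker, hker]; exact hmem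
      rwa [hF, Polynomial.derivative_map, key, ha₀] at this)
  have hρa : ρ a = α := by
    have : ρ (a - a₀) = 0 := by rw [← RingHom.mem_ker, hker]; exact hasub
    rw [map_sub, sub_eq_zero] at this
    rw [this, ha₀]
  have haeval : Polynomial.aeval a f = 0 := by
    rw [Polynomial.aeval_def, halg, ← Polynomial.eval_map]
    exact haroot
  -- the lift
  set ι₀ : L →ₐ[K] A := pb.lift a haeval with hι₀
  have hι₀gen : ι₀ α = a := pb.lift_gen a haeval
  -- ρ as an algebra hom
  set ρ' : A →ₐ[K] L := { ρ with commutes' := fun c => DFunLike.congr_fun hj c } with hρ'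
  have hcomp : ρ'.comp ι₀ = AlgHom.id K L := by
    apply pb.algHom_ext
    show ρ (ι₀ α) = α
    rw [hι₀gen, hρa]
  refine ⟨ι₀.toRingHom, ⟨?_, ?_⟩, ?_⟩
  · ext c
    exact ι₀.commutes c
  · ext x
    exact DFunLike.congr_fun hcomp x
  · -- uniqueness
    rintro ι' ⟨h1, h2⟩
    set b := ι' α with hb
    have hρb : ρ b = α := DFunLike.congr_fun h2 α
    have hbeval : F.eval b = 0 := by
      have hz : Polynomial.eval₂ (algebraMap K L) α f = 0 := by
        rw [← Polynomial.aeval_def]; exact minpoly.aeval K α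
      rw [hF, Polynomial.eval_map, show (j : K →+* A) = ι'.comp (algebraMap K L) from h1.symm,
        hb, ← Polynomial.hom_eval₂, hz, map_zero]
    have hba : b = a := by
      obtain ⟨k, hk⟩ := F.binomExpansion a (b - a)
      rw [add_sub_cancel] at hk
      have haF : F.eval a = 0 := haroot
      rw [hbeval, haF, zero_add] at hk
      have hfac : (b - a) * (F.derivative.eval a + k * (b - a)) = 0 := by linear_combination -hk
      have hunit : IsUnit (F.derivative.eval a + k * (b - a)) := by
        apply unit_of
        have h1' : ρ (b - a) = 0 := by rw [map_sub, hρb, hρa, sub_self]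
        rw [map_add, map_mul, h1', mul_zero, add_zero, hF, Polynomial.derivative_map, key, hρa]
        exact hdzero
      have hz : b - a = 0 := by
        obtain ⟨u, hu⟩ := hunit
        have := congrArg (fun x => x * (↑u⁻¹ : A)) hfac
        simpa [← hu, mul_assoc] using this
      rw [sub_eq_zero] at hz
      exact hz
    -- upgrade ι' to an algebra hom and use ext
    set ι'' : L →ₐ[K] A := { ι' with commutes' := fun c => (DFunLike.congr_fun h1 c : _) } with hι''
    have : ι'' = ι₀ := by
      apply pb.algHom_ext
      show ι' α = ι₀ α
      rw [hι₀gen, ← hb, hba]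
    ext x
    exact DFunLike.congr_fun (congrArg AlgHom.toRingHom this) x
end

section
/- Let (R, m) be a local ring with residue field K and let K ⊂ L be a field extension. Fix a coefficient field-compatible structure: for each i let R_i = R/m^i with a ring map ι_i: K → R_i splitting the residue map, compatibly in i. Then the natural map lim_i (R_i ⊗_K L) ≅ (lim_i R_i) ⊗̂_K L is an isomorphism of topological rings, where ⊗̂ denotes the completed tensor product (the coproduct in the category of topological rings with the inverse limit topologies), and each R_i ⊗_K L is a local ring with residue field L and nilpotent maximal ideal. -/
/-!
The coefficient field gives a retraction `A i → K` with kernel the maximal ideal; its base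
change `A i ⊗ L → L` is surjective with kernel generated by the (nilpotent) maximal ideal of
`A i`, so `A i ⊗ L` is local with residue field `L` and nilpotent maximal ideal. Since the
transition maps are surjective, so are the projections `lim A → A i`, hence also
`(lim A) ⊗ L → A i ⊗ L`: the `i`-th quotient of `(lim A) ⊗ L` is thus `A i ⊗ L` itself,
and the two inverse limits agree termwise.
-/

open IsLocalRing TensorProduct

set_option maxHeartbeats 1000000
set_option synthInstance.maxHeartbeats 400000

section

variable (K L : Type u) [Field K] [Field L] [Algebra K L]
  (A : ℕ → Type u) [∀ i, CommRing (A i)] [∀ i, Algebra K (A i)]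
  (T : ∀ i, A (i + 1) →ₐ[K] A i)

/-- The inverse limit `lim_i A i` of an `ℕ`-indexed inverse system of `K`-algebras,
realized as a subalgebra of the product. -/
def limAlg : Subalgebra K (∀ i, A i) where
  carrier := {x | ∀ i, T i (x (i + 1)) = x i}
  mul_mem' {x y} hx hy i := by
    simp only [Pi.mul_apply, map_mul, hx i, hy i]
  add_mem' {x y} hx hy i := by
    simp only [Pi.add_apply, map_add, hx i, hy i]
  algebraMap_mem' r i := by
    simp only [Pi.algebraMap_apply, AlgHom.commutes]

/-- The commutative ring structure of `limAlg` as a subalgebra (added in the port: instance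
search no longer finds `Subalgebra.toCommRing` for it inside the tensor product). -/
noncomputable instance limAlg.instCommRing : CommRing (limAlg K A T) :=
  Subalgebra.toCommRing (limAlg K A T)

/-- The projection from the inverse limit to the `i`-th component. -/
def projA (i : ℕ) : limAlg K A T →ₐ[K] A i :=
  (Pi.evalAlgHom K A i).comp (limAlg K A T).val

/-- The canonical map `(lim_i A i) ⊗_K L → A i ⊗_K L`. -/
noncomputable def tensorProj (i : ℕ) :
    (limAlg K A T) ⊗[K] L →ₐ[K] (A i ⊗[K] L) :=
  Algebra.TensorProduct.map (projA K A T i) (AlgHom.id K L)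

/-- The inverse limit `lim_i (A i ⊗_K L)` of the base-changed system. -/
noncomputable def limTensor : Subalgebra K (∀ i, A i ⊗[K] L) where
  carrier := {x | ∀ i,
    Algebra.TensorProduct.map (T i) (AlgHom.id K L) (x (i + 1)) = x i}
  mul_mem' {x y} hx hy i := by
    simp only [Pi.mul_apply, map_mul, hx i, hy i]
  add_mem' {x y} hx hy i := by
    simp only [Pi.add_apply, map_add, hx i, hy i]
  algebraMap_mem' r i := by
    simp only [Pi.algebraMap_apply, AlgHom.commutes]

/-- The `i`-th quotient `((lim_j A j) ⊗_K L) / ker(pᵢ)` of the (algebraic) tensor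
product, whose inverse limit is the completed tensor product `(lim_i A i) ⊗̂_K L`. -/
noncomputable abbrev BQuot (i : ℕ) : Type u :=
  ((limAlg K A T) ⊗[K] L) ⧸ RingHom.ker (tensorProj K L A T i).toRingHom

/-- The inverse limit of the quotients `BQuot i`, i.e. the completed tensor product
`(lim_i A i) ⊗̂_K L` (the coproduct in the category of topological rings, each quotient
carrying the discrete topology and the limits the inverse-limit topologies). -/
noncomputable def limBQuot (hker : ∀ i,
    RingHom.ker (tensorProj K L A T (i + 1)).toRingHom ≤
      RingHom.ker (tensorProj K L A T i).toRingHom) :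
    Subring (∀ i, BQuot K L A T i) :=
  RingHom.eqLocus (S := ∀ i, BQuot K L A T i)
    (Pi.ringHom fun i => (Ideal.Quotient.factor (hker i)).comp
      (Pi.evalRingHom (fun j => BQuot K L A T j) (i + 1)))
    (RingHom.id _)

theorem exists_compatible_seq_eq_of_surjective {X : ℕ → Type*} (f : ∀ n, X (n + 1) → X n)
    (hf : ∀ n, Function.Surjective (f n)) (i : ℕ) (a : X i) :
    ∃ x : ∀ n, X n, (∀ n, f n (x (n + 1)) = x n) ∧ x i = a := by
  induction i generalizing X with
  | zero =>
    refine ⟨fun n => Nat.rec (motive := X) a (fun n y => Function.surjInv (hf n) y) n,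
      fun n => Function.surjInv_eq (hf n) _, rfl⟩
  | succ i ih =>
    -- apply the induction hypothesis to the shifted system `n ↦ X (n + 1)`
    obtain ⟨x, hx, hxi⟩ :=
      ih (X := fun n => X (n + 1)) (fun n => f (n + 1)) (fun n => hf (n + 1)) a
    refine ⟨fun | 0 => f 0 (x 0) | n + 1 => x n, fun | 0 => rfl | n + 1 => hx n, hxi⟩

theorem IsLocalRing.of_surjective_of_ker_pow_eq_bot {S F : Type*} [CommRing S] [Field F]
    (σ : S →+* F) (hσ : Function.Surjective σ) {m : ℕ} (hm : RingHom.ker σ ^ m = ⊥) :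
    IsLocalRing S := by
  have hmax := RingHom.ker_isMaximal_of_surjective σ hσ
  have hnil : RingHom.ker σ ≤ nilradical S := fun x hx =>
    ⟨m, by simpa [hm] using Ideal.pow_mem_pow hx m⟩
  have : (nilradical S).IsMaximal := by
    rwa [le_antisymm (nilradical_le_prime _) hnil]
  exact IsLocalRing.of_isMaximal_nilradical S

section CoefficientField

variable {K L B : Type*} [Field K] [Field L] [Algebra K L]
  [CommRing B] [IsLocalRing B] [Algebra K B]

noncomputable def coefficientRetraction
    (hres : Function.Bijective ((residue B).comp (algebraMap K B))) : B →ₐ[K] K where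
  toRingHom := (RingEquiv.ofBijective _ hres).symm.toRingHom.comp (residue B)
  commutes' k := (RingEquiv.ofBijective _ hres).symm_apply_apply k

theorem ker_coefficientRetraction
    (hres : Function.Bijective ((residue B).comp (algebraMap K B))) :
    RingHom.ker (coefficientRetraction hres) = maximalIdeal B := by
  rw [← ker_residue]
  exact RingHom.ker_comp_of_injective _ (RingEquiv.ofBijective _ hres).symm.injective

theorem coefficientRetraction_surjective
    (hres : Function.Bijective ((residue B).comp (algebraMap K B))) :
    Function.Surjective (coefficientRetraction hres) :=
  fun k => ⟨algebraMap K B k, AlgHom.commutes _ k⟩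

variable (L) in
noncomputable def tensorResidue
    (hres : Function.Bijective ((residue B).comp (algebraMap K B))) : B ⊗[K] L →ₐ[K] L :=
  (Algebra.TensorProduct.lid K L).toAlgHom.comp
    (Algebra.TensorProduct.map (coefficientRetraction hres) (AlgHom.id K L))

theorem tensorResidue_surjective
    (hres : Function.Bijective ((residue B).comp (algebraMap K B))) :
    Function.Surjective (tensorResidue L hres) :=
  (Algebra.TensorProduct.lid K L).surjective.comp <|
    Algebra.TensorProduct.map_surjective _ _ (coefficientRetraction_surjective hres)
      Function.surjective_id

theorem ker_tensorResidue
    (hres : Function.Bijective ((residue B).comp (algebraMap K B))) :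
    RingHom.ker (tensorResidue L hres) =
      (maximalIdeal B).map (Algebra.TensorProduct.includeLeft : B →ₐ[K] B ⊗[K] L) := by
  rw [← ker_coefficientRetraction hres, ← Algebra.TensorProduct.rTensor_ker _
    (coefficientRetraction_surjective hres)]
  exact RingHom.ker_comp_of_injective _ (Algebra.TensorProduct.lid K L).injective

theorem exists_isLocalRing_tensorProduct
    (hres : Function.Bijective ((residue B).comp (algebraMap K B)))
    (hnil : ∃ m : ℕ, maximalIdeal B ^ m = ⊥) :
    ∃ h : IsLocalRing (B ⊗[K] L),
      (∃ m : ℕ, (@IsLocalRing.maximalIdeal _ _ h) ^ m = ⊥) ∧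
      ∃ σ : (B ⊗[K] L) →+* L, Function.Surjective σ ∧
        RingHom.ker σ = @IsLocalRing.maximalIdeal _ _ h := by
  obtain ⟨m, hm⟩ := hnil
  let σ : (B ⊗[K] L) →+* L := tensorResidue L hres
  have hσ : Function.Surjective σ := tensorResidue_surjective hres
  have hpow : RingHom.ker σ ^ m = ⊥ := by
    rw [show RingHom.ker σ = _ from ker_tensorResidue hres, ← Ideal.map_pow, hm, Ideal.map_bot]
  have hloc := IsLocalRing.of_surjective_of_ker_pow_eq_bot σ hσ hpow
  have hker := IsLocalRing.ker_eq_maximalIdeal σ hσ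
  exact ⟨hloc, ⟨m, hker ▸ hpow⟩, σ, hσ, hker⟩

end CoefficientField

theorem projA_surjective (hsurjT : ∀ i, Function.Surjective (T i)) (i : ℕ) :
    Function.Surjective (projA K A T i) := fun a => by
  obtain ⟨x, hx, rfl⟩ := exists_compatible_seq_eq_of_surjective (fun n => T n) hsurjT i a
  exact ⟨⟨x, hx⟩, rfl⟩

theorem tensorProj_surjective (hsurjT : ∀ i, Function.Surjective (T i)) (i : ℕ) :
    Function.Surjective (tensorProj K L A T i) :=
  Algebra.TensorProduct.map_surjective _ _ (projA_surjective K A T hsurjT i)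
    Function.surjective_id

theorem map_tensorProj_succ (i : ℕ) (b : limAlg K A T ⊗[K] L) :
    Algebra.TensorProduct.map (T i) (AlgHom.id K L) (tensorProj K L A T (i + 1) b) =
      tensorProj K L A T i b := by
  have hT : (T i).comp (projA K A T (i + 1)) = projA K A T i := AlgHom.ext fun x => x.2 i
  rw [tensorProj, tensorProj, ← hT]
  exact (DFunLike.congr_fun (Algebra.TensorProduct.map_comp _ _ (AlgHom.id K L) _) b).symm

theorem mem_limBQuot_iff (hker : ∀ i, RingHom.ker (tensorProj K L A T (i + 1)).toRingHom ≤
      RingHom.ker (tensorProj K L A T i).toRingHom) (x : ∀ i, BQuot K L A T i) :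
    x ∈ limBQuot K L A T hker ↔ ∀ i, Ideal.Quotient.factor (hker i) (x (i + 1)) = x i :=
  funext_iff

theorem map_kerLift_succ (hker : ∀ i, RingHom.ker (tensorProj K L A T (i + 1)).toRingHom ≤
      RingHom.ker (tensorProj K L A T i).toRingHom) (i : ℕ) (x : BQuot K L A T (i + 1)) :
    Algebra.TensorProduct.map (T i) (AlgHom.id K L)
        (RingHom.kerLift (tensorProj K L A T (i + 1)).toRingHom x) =
      RingHom.kerLift (tensorProj K L A T i).toRingHom (Ideal.Quotient.factor (hker i) x) := by
  obtain ⟨b, rfl⟩ := Ideal.Quotient.mk_surjective x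
  rw [Ideal.Quotient.factor_mk, RingHom.kerLift_mk, RingHom.kerLift_mk]
  exact map_tensorProj_succ K L A T i b

noncomputable def limBQuotToLimTensor
    (hker : ∀ i, RingHom.ker (tensorProj K L A T (i + 1)).toRingHom ≤
      RingHom.ker (tensorProj K L A T i).toRingHom) :
    limBQuot K L A T hker →+* limTensor K L A T :=
  ((RingHom.pi fun i => (RingHom.kerLift (tensorProj K L A T i).toRingHom).comp
      (Pi.evalRingHom (fun j => BQuot K L A T j) i)).comp (limBQuot K L A T hker).subtype)
    |>.codRestrict (limTensor K L A T).toSubring fun x i => by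
      change Algebra.TensorProduct.map (T i) (AlgHom.id K L)
        (RingHom.kerLift _ ((x : ∀ j, BQuot K L A T j) (i + 1))) = RingHom.kerLift _ _
      rw [map_kerLift_succ K L A T hker, (mem_limBQuot_iff K L A T hker _).1 x.2 i]
      rfl

theorem limBQuotToLimTensor_apply
    (hker : ∀ i, RingHom.ker (tensorProj K L A T (i + 1)).toRingHom ≤
      RingHom.ker (tensorProj K L A T i).toRingHom) (x : limBQuot K L A T hker) (i : ℕ) :
    (limBQuotToLimTensor K L A T hker x : ∀ i, A i ⊗[K] L) i =
      RingHom.kerLift (tensorProj K L A T i).toRingHom ((x : ∀ i, BQuot K L A T i) i) :=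
  rfl

theorem limBQuotToLimTensor_injective
    (hker : ∀ i, RingHom.ker (tensorProj K L A T (i + 1)).toRingHom ≤
      RingHom.ker (tensorProj K L A T i).toRingHom) :
    Function.Injective (limBQuotToLimTensor K L A T hker) := fun x y hxy =>
  Subtype.ext <| funext fun i => RingHom.kerLift_injective _ <| by
    simpa only [limBQuotToLimTensor_apply] using congrFun (congrArg Subtype.val hxy) i

theorem limBQuotToLimTensor_surjective (hsurjT : ∀ i, Function.Surjective (T i))
    (hker : ∀ i, RingHom.ker (tensorProj K L A T (i + 1)).toRingHom ≤
      RingHom.ker (tensorProj K L A T i).toRingHom) :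
    Function.Surjective (limBQuotToLimTensor K L A T hker) := by
  rintro ⟨y, hy⟩
  choose b hb using fun i => tensorProj_surjective K L A T hsurjT i (y i)
  have hmem : (fun i => Ideal.Quotient.mk _ (b i)) ∈ limBQuot K L A T hker := by
    refine (mem_limBQuot_iff K L A T hker _).2 fun i => ?_
    rw [Ideal.Quotient.factor_mk, Ideal.Quotient.mk_eq_mk_iff_sub_mem]
    change tensorProj K L A T i (b (i + 1) - b i) = 0
    rw [map_sub, ← map_tensorProj_succ, hb, hb, hy i, sub_self]
  exact ⟨⟨_, hmem⟩, Subtype.ext <| funext fun i => hb i⟩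

/-- Let `(R_i)` be a surjective inverse system of local `K`-algebras with residue field
`K` and nilpotent maximal ideals (coefficient fields chosen compatibly, i.e. the
`K`-algebra structures), and `K ⊆ L` a field extension. Then: (1) each `R_i ⊗_K L` is a
local ring with nilpotent maximal ideal and residue field `L`; and (2) the natural map
`lim_i (R_i ⊗_K L) ≅ (lim_i R_i) ⊗̂_K L` is an isomorphism of topological rings, where
the completed tensor product is the inverse limit of the quotients of
`(lim_i R_i) ⊗_K L` by the kernels of the canonical maps to `R_i ⊗_K L` (the
compatibility with all projections expressing that the isomorphism is topological for
the inverse-limit topologies). -/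
theorem base_change_of_limit_test_rings
    [∀ i, IsLocalRing (A i)]
    (hsurjT : ∀ i, Function.Surjective (T i))
    (hres : ∀ i, Function.Bijective ((residue (A i)).comp (algebraMap K (A i))))
    (hnil : ∀ i, ∃ m : ℕ, (maximalIdeal (A i)) ^ m = ⊥)
    (hker : ∀ i, RingHom.ker (tensorProj K L A T (i + 1)).toRingHom ≤
      RingHom.ker (tensorProj K L A T i).toRingHom) :
    (∀ i, ∃ h : IsLocalRing (A i ⊗[K] L),
      (∃ m : ℕ, (@IsLocalRing.maximalIdeal _ _ h) ^ m = ⊥) ∧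
      ∃ σ : (A i ⊗[K] L) →+* L, Function.Surjective σ ∧
        RingHom.ker σ = @IsLocalRing.maximalIdeal _ _ h) ∧
    ∃ e : limBQuot K L A T hker ≃+* limTensor K L A T,
      ∀ (x : limBQuot K L A T hker) (i : ℕ),
        (e x : ∀ i, A i ⊗[K] L) i =
          RingHom.kerLift (tensorProj K L A T i).toRingHom ((x : ∀ i, BQuot K L A T i) i) :=
  ⟨fun i => exists_isLocalRing_tensorProduct (hres i) (hnil i),
    RingEquiv.ofBijective _ ⟨limBQuotToLimTensor_injective K L A T hker,
      limBQuotToLimTensor_surjective K L A T hsurjT hker⟩,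
    limBQuotToLimTensor_apply K L A T hker⟩

end
end
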